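/- arXiv:1911.02141 — 2 statements merged into one kernel-verified Lean document; each statement's English description precedes it below -/
import Mathlib

section
/- Let n ≥ 8 be an even integer and ℓ an odd prime, and let d(n), t(n) be constants as in the preceding group-theoretic theorem. If d > d(n) is an integer, t > t(n) is a prime distinct from ℓ, and Γ is a finite subgroup of GO_n(F̄_ℓ) such that Γ^d contains a subgroup of type Γ_t, then there exist g ∈ GL_n(F̄_ℓ), a positive integer k and a sign ε ∈ {+, −} such that g⁻¹Γg contains Ω_n^ε(F_{ℓ^k}). -/
/-!
Statement 2 (Corollary `kls26` in the paper): if moreover `Γ` consists of similitudes of a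
nondegenerate symmetric bilinear form, then a conjugate of `Γ` contains `Ω_n^ε(F_{ℓ^k})`.
-/

open Matrix

section Defs

variable {F : Type*} [Field F] {n : ℕ}

/-- The isometry group of a quadratic form `Q`, as a subgroup of `GL`. -/
def qIsom (Q : QuadraticForm F (Fin n → F)) : Subgroup (GL (Fin n) F) where
  carrier := {g | ∀ x, Q ((g : Matrix (Fin n) (Fin n) F) *ᵥ x) = Q x}
  one_mem' := by intro x; simp
  mul_mem' := by
    intro a b ha hb x
    have h : ((a * b : GL (Fin n) F) : Matrix (Fin n) (Fin n) F) *ᵥ x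
        = (a : Matrix (Fin n) (Fin n) F) *ᵥ ((b : Matrix (Fin n) (Fin n) F) *ᵥ x) := by
      rw [Matrix.mulVec_mulVec, Units.val_mul]
    rw [h, ha, hb]
  inv_mem' := by
    intro a ha x
    have h := ha (((a⁻¹ : GL (Fin n) F) : Matrix (Fin n) (Fin n) F) *ᵥ x)
    rw [Matrix.mulVec_mulVec, a.mul_inv, Matrix.one_mulVec] at h
    exact h.symm

/-- The isometry group of the (sesquilinear) form given by a matrix `J` and a field
homomorphism `σ`, i.e. all `g` with `gᵀ * J * g^σ = J`. -/
def sesqIsom (σ : F →+* F) (J : Matrix (Fin n) (Fin n) F) : Subgroup (GL (Fin n) F) where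
  carrier := {g | ((g : Matrix (Fin n) (Fin n) F))ᵀ * J * (g : Matrix (Fin n) (Fin n) F).map σ = J}
  one_mem' := by
    show ((1 : GL (Fin n) F) : Matrix (Fin n) (Fin n) F)ᵀ * J * _ = J
    rw [Units.val_one, Matrix.transpose_one, Matrix.one_mul,
      Matrix.map_one σ (map_zero σ) (map_one σ), Matrix.mul_one]
  mul_mem' := by
    intro a b ha hb
    show ((a * b : GL (Fin n) F) : Matrix (Fin n) (Fin n) F)ᵀ * J *
      ((a * b : GL (Fin n) F) : Matrix (Fin n) (Fin n) F).map σ = J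
    have ha' : ((a : Matrix (Fin n) (Fin n) F))ᵀ * J * (a : Matrix (Fin n) (Fin n) F).map σ = J := ha
    have hb' : ((b : Matrix (Fin n) (Fin n) F))ᵀ * J * (b : Matrix (Fin n) (Fin n) F).map σ = J := hb
    rw [Units.val_mul, Matrix.transpose_mul, Matrix.map_mul]
    calc (b : Matrix (Fin n) (Fin n) F)ᵀ * (a : Matrix (Fin n) (Fin n) F)ᵀ * J *
          ((a : Matrix (Fin n) (Fin n) F).map σ * (b : Matrix (Fin n) (Fin n) F).map σ)
        = (b : Matrix (Fin n) (Fin n) F)ᵀ *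
            ((a : Matrix (Fin n) (Fin n) F)ᵀ * J * (a : Matrix (Fin n) (Fin n) F).map σ) *
            (b : Matrix (Fin n) (Fin n) F).map σ := by
          simp only [Matrix.mul_assoc]
      _ = J := by rw [ha', hb']
  inv_mem' := by
    intro a ha
    have ha' : ((a : Matrix (Fin n) (Fin n) F))ᵀ * J * (a : Matrix (Fin n) (Fin n) F).map σ = J := ha
    show ((a⁻¹ : GL (Fin n) F) : Matrix (Fin n) (Fin n) F)ᵀ * J *
      ((a⁻¹ : GL (Fin n) F) : Matrix (Fin n) (Fin n) F).map σ = J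
    have key := congrArg (fun M : Matrix (Fin n) (Fin n) F => Mᵀ * J * M.map σ) a.mul_inv
    simp only [Matrix.transpose_mul, Matrix.map_mul, Matrix.transpose_one,
      Matrix.map_one σ (map_zero σ) (map_one σ), Matrix.one_mul, Matrix.mul_one] at key
    calc ((a⁻¹ : GL (Fin n) F) : Matrix (Fin n) (Fin n) F)ᵀ * J *
          ((a⁻¹ : GL (Fin n) F) : Matrix (Fin n) (Fin n) F).map σ
        = ((a⁻¹ : GL (Fin n) F) : Matrix (Fin n) (Fin n) F)ᵀ *
            (((a : Matrix (Fin n) (Fin n) F))ᵀ * J * (a : Matrix (Fin n) (Fin n) F).map σ) *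
            ((a⁻¹ : GL (Fin n) F) : Matrix (Fin n) (Fin n) F).map σ := by rw [ha']
      _ = J := by
          simp only [Matrix.mul_assoc] at key ⊢
          exact key

/-- The group `GO(J)` of similitudes of the bilinear form given by a matrix `J`:
all `g` with `gᵀ * J * g = c • J` for some scalar `c ≠ 0`. -/
def bSim (J : Matrix (Fin n) (Fin n) F) : Subgroup (GL (Fin n) F) where
  carrier := {g | ∃ c : F, c ≠ 0 ∧
    ((g : Matrix (Fin n) (Fin n) F))ᵀ * J * (g : Matrix (Fin n) (Fin n) F) = c • J}
  one_mem' := ⟨1, one_ne_zero, by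
    rw [Units.val_one, Matrix.transpose_one, Matrix.one_mul, Matrix.mul_one, one_smul]⟩
  mul_mem' := by
    rintro a b ⟨c, hc, hca⟩ ⟨d, hd, hdb⟩
    refine ⟨d * c, mul_ne_zero hd hc, ?_⟩
    rw [Units.val_mul, Matrix.transpose_mul]
    calc (b : Matrix (Fin n) (Fin n) F)ᵀ * (a : Matrix (Fin n) (Fin n) F)ᵀ * J *
          ((a : Matrix (Fin n) (Fin n) F) * (b : Matrix (Fin n) (Fin n) F))
        = (b : Matrix (Fin n) (Fin n) F)ᵀ *
            ((a : Matrix (Fin n) (Fin n) F)ᵀ * J * (a : Matrix (Fin n) (Fin n) F)) *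
            (b : Matrix (Fin n) (Fin n) F) := by simp only [Matrix.mul_assoc]
      _ = c • ((b : Matrix (Fin n) (Fin n) F)ᵀ * J * (b : Matrix (Fin n) (Fin n) F)) := by
          rw [hca]; simp only [Matrix.smul_mul, Matrix.mul_smul]
      _ = (d * c) • J := by rw [hdb, smul_smul, mul_comm]
  inv_mem' := by
    rintro a ⟨c, hc, hca⟩
    refine ⟨c⁻¹, inv_ne_zero hc, ?_⟩
    have key := congrArg (fun M : Matrix (Fin n) (Fin n) F => Mᵀ * J * M) a.mul_inv
    simp only [Matrix.transpose_mul, Matrix.transpose_one, Matrix.one_mul, Matrix.mul_one] at key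
    have h : ((a⁻¹ : GL (Fin n) F) : Matrix (Fin n) (Fin n) F)ᵀ *
        (((a : Matrix (Fin n) (Fin n) F))ᵀ * J * (a : Matrix (Fin n) (Fin n) F)) *
        ((a⁻¹ : GL (Fin n) F) : Matrix (Fin n) (Fin n) F) = J := by
      simp only [Matrix.mul_assoc] at key ⊢
      exact key
    rw [hca] at h
    calc ((a⁻¹ : GL (Fin n) F) : Matrix (Fin n) (Fin n) F)ᵀ * J *
          ((a⁻¹ : GL (Fin n) F) : Matrix (Fin n) (Fin n) F)
        = c⁻¹ • (((a⁻¹ : GL (Fin n) F) : Matrix (Fin n) (Fin n) F)ᵀ * (c • J) *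
            ((a⁻¹ : GL (Fin n) F) : Matrix (Fin n) (Fin n) F)) := by
          simp only [Matrix.mul_smul, Matrix.smul_mul, smul_smul, inv_mul_cancel₀ hc, one_smul]
      _ = c⁻¹ • J := by rw [h]

end Defs

/-- `Γ^d`: the intersection of all normal subgroups of `Γ` of index at most `d`. -/
def capNormal (G : Type*) [Group G] (d : ℕ) : Subgroup G :=
  ⨅ (H : Subgroup G) (_ : H.Normal ∧ H.index ≤ d), H

/-- A group `G` is of type `Γ_t` (for the prime `t` and the integer `n`) if it is a
non-abelian homomorphic image of some extension of `ℤ/nℤ` by `ℤ/tℤ` in which the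
conjugation action of `ℤ/nℤ` on `ℤ/tℤ` is faithful. -/
def IsGammaT (t n : ℕ) (G : Type*) [Group G] : Prop :=
  (∃ a b : G, a * b ≠ b * a) ∧
  ∃ (E : Type) (_ : Group E) (T : Subgroup E) (_ : T.Normal) (φ : E →* G),
    Function.Surjective φ ∧
    Nonempty (T ≃* Multiplicative (ZMod t)) ∧
    Nonempty ((E ⧸ T) ≃* Multiplicative (ZMod n)) ∧
    (∀ e : E, (∀ x ∈ T, e * x * e⁻¹ = x) → e ∈ T)

/-- The conjugate subgroup `g⁻¹ Γ g`. -/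
def conjSub {G : Type*} [Group G] (g : G) (Γ : Subgroup G) : Subgroup G :=
  Γ.map (MulAut.conj g⁻¹).toMonoidHom

section Helpers

variable {K : Type*} [Field K] {n : ℕ}

variable {K : Type*} [Field K] {n : ℕ}

lemma vmv_transpose (u w : Fin n → K) : (vecMulVec u w)ᵀ = vecMulVec w u := by
  ext i j; simp [vecMulVec_apply, mul_comm]

lemma mul_vmv (M : Matrix (Fin n) (Fin n) K) (u w : Fin n → K) :
    M * vecMulVec u w = vecMulVec (M *ᵥ u) w := by
  ext i j; simp [Matrix.mul_apply, vecMulVec_apply, mulVec, dotProduct,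
    Finset.sum_mul, mul_assoc]

lemma vmv_mul (M : Matrix (Fin n) (Fin n) K) (u w : Fin n → K) :
    vecMulVec u w * M = vecMulVec u (w ᵥ* M) := by
  ext i j; simp [Matrix.mul_apply, vecMulVec_apply, vecMul, dotProduct,
    Finset.mul_sum, mul_assoc]

lemma vmv_vmv (x y z t : Fin n → K) :
    vecMulVec x y * vecMulVec z t = (y ⬝ᵥ z) • vecMulVec x t := by
  rw [vmv_mul]
  ext i j
  simp [vecMulVec_apply, vecMul, dotProduct, Finset.sum_mul, Finset.mul_sum]
  rw [Finset.sum_congr rfl (fun k _ => by ring : ∀ k ∈ Finset.univ, x i * (y k * (z k * t j)) = y k * z k * (x i * t j))]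

lemma vmv_mulVec (x y z : Fin n → K) :
    vecMulVec x y *ᵥ z = (y ⬝ᵥ z) • x := by
  ext i; simp [mulVec, dotProduct, vecMulVec_apply, Finset.mul_sum]
  rw [Finset.sum_mul]
  exact Finset.sum_congr rfl fun k _ => by ring

lemma vmv_map {L : Type*} [Field L] (f : K →+* L) (u w : Fin n → K) :
    (vecMulVec u w).map f = vecMulVec (f ∘ u) (f ∘ w) := by
  ext i j; simp [vecMulVec_apply]

lemma det_one_add_vmv (u w : Fin n → K) :
    (1 + vecMulVec u w).det = 1 + w ⬝ᵥ u := by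
  rw [vecMulVec_eq Unit, det_one_add_replicateCol_mul_replicateRow]

/-- A nontrivial "transvection-like" element `1 + u wᵀ` (with `w ⬝ u = 0`) can never be a
similitude of a nondegenerate symmetric bilinear form, in characteristic ≠ 2, `n ≥ 3`. -/
lemma ortho_no_transvection (hn : 3 ≤ n) (h2 : (2 : K) ≠ 0)
    (J : Matrix (Fin n) (Fin n) K) (hJs : Jᵀ = J) (hJd : IsUnit J.det)
    (u w : Fin n → K) (hu : u ≠ 0) (hw : w ≠ 0) (hwu : w ⬝ᵥ u = 0)
    (c : K) (heq : (1 + vecMulVec u w)ᵀ * J * (1 + vecMulVec u w) = c • J) : False := by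
  have hJinv : J⁻¹ * J = 1 := Matrix.nonsing_inv_mul J hJd
  set a : Fin n → K := J *ᵥ u with ha
  have ha0 : a ≠ 0 := by
    intro h
    apply hu
    have : J⁻¹ *ᵥ (J *ᵥ u) = J⁻¹ *ᵥ 0 := by rw [← ha, h]
    simpa [Matrix.mulVec_mulVec, hJinv] using this
  have hr : u ᵥ* J = a := by
    ext j
    simp only [vecMul, mulVec, dotProduct, ha]
    exact Finset.sum_congr rfl fun i _ => by
      rw [show J i j = J j i from congrFun (congrFun hJs j) i]; ring
  set s : K := a ⬝ᵥ u with hs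
  have heq' : J + (vecMulVec w a + vecMulVec a w + s • vecMulVec w w) = c • J := by
    have e1 : vecMulVec w u * J = vecMulVec w a := by rw [vmv_mul, hr]
    have e2 : J * vecMulVec u w = vecMulVec a w := by rw [mul_vmv, ← ha]
    rw [← heq, transpose_add, transpose_one, vmv_transpose]
    simp only [add_mul, mul_add, one_mul, mul_one]
    rw [e1, e2, vmv_vmv, ← hs]
    abel
  have hJx0 : ∀ x : Fin n → K, J *ᵥ x = 0 → x = 0 := by
    intro x hx
    have : J⁻¹ *ᵥ (J *ᵥ x) = J⁻¹ *ᵥ 0 := by rw [hx]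
    simpa [Matrix.mulVec_mulVec, hJinv] using this
  by_cases hc : c = 1
  · subst hc
    have hM : vecMulVec w a + vecMulVec a w + s • vecMulVec w w = 0 := by
      have := heq'
      rw [one_smul] at this
      have := congrArg (fun M => M - J) this
      simpa [add_sub_cancel_left] using this
    have hMu := congrArg (fun M => M *ᵥ u) hM
    simp only [Matrix.add_mulVec, Matrix.smul_mulVec, vmv_mulVec, hwu,
      Matrix.zero_mulVec, zero_smul, smul_zero, add_zero, ← hs] at hMu
    -- hMu : s • w + 0 = 0 roughly; deduce s = 0
    have hs0 : s = 0 := by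
      obtain ⟨j, hj⟩ := Function.ne_iff.mp hw
      simp only [Pi.zero_apply] at hj
      have hsw : s * w j = 0 := by
        have h := congrFun hMu j
        simpa using h
      rcases mul_eq_zero.mp hsw with h | h
      · exact h
      · exact absurd h hj
    rw [hs0, zero_smul, add_zero] at hM
    obtain ⟨i0, hi0⟩ := Function.ne_iff.mp hw
    simp only [Pi.zero_apply] at hi0
    have hai0 : a i0 = 0 := by
      have h := congrFun (congrFun hM i0) i0
      simp only [Matrix.add_apply, vecMulVec_apply, Pi.zero_apply,
        Matrix.zero_apply] at h
      rw [mul_comm (a i0), ← two_mul] at h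
      rcases mul_eq_zero.mp h with h' | h'
      · exact absurd h' h2
      · rcases mul_eq_zero.mp h' with h'' | h''
        · exact absurd h'' hi0
        · exact h''
    apply ha0
    ext j
    have := congrFun (congrFun hM i0) j
    simp only [Matrix.add_apply, vecMulVec_apply, Pi.zero_apply, Matrix.zero_apply,
      hai0, zero_mul, add_zero] at this
    rcases mul_eq_zero.mp this with h | h
    · exact absurd h hi0
    · simpa using h
  · -- c ≠ 1 : find x ≠ 0 orthogonal to a and w
    have hker : ∃ x : Fin n → K, x ≠ 0 ∧ a ⬝ᵥ x = 0 ∧ w ⬝ᵥ x = 0 := by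
      let φ : (Fin n → K) →ₗ[K] K × K :=
        { toFun := fun x => (a ⬝ᵥ x, w ⬝ᵥ x)
          map_add' := fun x y => by simp [dotProduct_add]
          map_smul' := fun c x => by simp [dotProduct_smul] }
      by_cases hinj : Function.Injective φ
      · have := LinearMap.finrank_le_finrank_of_injective hinj
        rw [Module.finrank_pi, Module.finrank_prod, Module.finrank_self] at this
        simp [Fintype.card_fin] at this
        omega
      · rw [← LinearMap.ker_eq_bot] at hinj
        obtain ⟨x, hx, hx0⟩ := Submodule.exists_mem_ne_zero_of_ne_bot hinj
        refine ⟨x, hx0, ?_, ?_⟩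
        · exact congrArg Prod.fst (LinearMap.mem_ker.mp hx)
        · exact congrArg Prod.snd (LinearMap.mem_ker.mp hx)
    obtain ⟨x, hx0, hax, hwx⟩ := hker
    have := congrArg (fun M => M *ᵥ x) heq'
    simp only [Matrix.add_mulVec, Matrix.smul_mulVec, vmv_mulVec, hax, hwx,
      zero_smul, smul_zero, add_zero] at this
    have hJx : ((1 : K) - c) • (J *ᵥ x) = 0 := by
      rw [sub_smul, one_smul, sub_eq_zero]
      exact this
    have hzero : J *ᵥ x = 0 := by
      rcases smul_eq_zero.mp hJx with h | h
      · rw [sub_eq_zero] at h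
        exact absurd h.symm hc
      · exact h
    exact hx0 (hJx0 x hzero)

/-- Construct a `GL` element from a square-zero perturbation of the identity. -/
def unipUnit (B : Matrix (Fin n) (Fin n) K) (hB : B * B = 0) : GL (Fin n) K where
  val := 1 + B
  inv := 1 - B
  val_inv := by rw [mul_sub, mul_one, add_mul, one_mul, hB]; abel
  inv_val := by rw [sub_mul, one_mul, mul_add, mul_one, hB]; abel

lemma unipUnit_val (B : Matrix (Fin n) (Fin n) K) (hB : B * B = 0) :
    ((unipUnit B hB : GL (Fin n) K) : Matrix (Fin n) (Fin n) K) = 1 + B := rfl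

/-- An element of a conjugate of a subgroup of similitudes is itself a similitude of the
conjugated form. -/
lemma conj_mem_bSim (J0 : Matrix (Fin n) (Fin n) K) (Γ : Subgroup (GL (Fin n) K))
    (hGO : Γ ≤ bSim J0) (g x : GL (Fin n) K) (hx : x ∈ conjSub g Γ) :
    ∃ c : K, c ≠ 0 ∧ (x : Matrix (Fin n) (Fin n) K)ᵀ *
      (((g : Matrix (Fin n) (Fin n) K))ᵀ * J0 * (g : Matrix (Fin n) (Fin n) K)) *
      (x : Matrix (Fin n) (Fin n) K)
      = c • (((g : Matrix (Fin n) (Fin n) K))ᵀ * J0 * (g : Matrix (Fin n) (Fin n) K)) := by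
  obtain ⟨y, hy, rfl⟩ := hx
  obtain ⟨c, hc, hyJ⟩ := hGO hy
  refine ⟨c, hc, ?_⟩
  set G : Matrix (Fin n) (Fin n) K := (g : Matrix (Fin n) (Fin n) K) with hG
  set Gi : Matrix (Fin n) (Fin n) K := ((g⁻¹ : GL (Fin n) K) : Matrix (Fin n) (Fin n) K) with hGi
  set Y : Matrix (Fin n) (Fin n) K := (y : Matrix (Fin n) (Fin n) K) with hY
  have hval : ((MulAut.conj g⁻¹).toMonoidHom y : GL (Fin n) K).val = Gi * Y * G := by
    show ((g⁻¹ * y * (g⁻¹)⁻¹ : GL (Fin n) K) : Matrix (Fin n) (Fin n) K) = Gi * Y * G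
    rw [inv_inv]
    simp [Units.val_mul, hG, hGi, hY]
  have h1 : G * Gi = 1 := Units.mul_inv g
  rw [hval]
  have expand : (Gi * Y * G)ᵀ * (Gᵀ * J0 * G) * (Gi * Y * G)
      = Gᵀ * (Yᵀ * ((Giᵀ * Gᵀ) * J0 * (G * Gi)) * Y) * G := by
    simp only [transpose_mul, Matrix.mul_assoc]
  have h1t : Giᵀ * Gᵀ = 1 := by rw [← transpose_mul, h1, transpose_one]
  rw [expand, h1t, h1, Matrix.one_mul, Matrix.mul_one, hyJ]
  simp only [Matrix.smul_mul, Matrix.mul_smul]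

/-- The standard quadratic form `x ↦ x ⬝ᵥ x`. -/
def stdQ (F : Type*) [Field F] (n : ℕ) : QuadraticForm F (Fin n → F) where
  toFun x := x ⬝ᵥ x
  toFun_smul a x := by
    simp only [smul_dotProduct, dotProduct_smul, smul_eq_mul]
    ring
  exists_companion' := by
    refine ⟨LinearMap.mk₂ F (fun x y => 2 * (x ⬝ᵥ y)) (fun x x' y => ?_) (fun a x y => ?_)
      (fun x y y' => ?_) (fun a x y => ?_), fun x y => ?_⟩
    · rw [add_dotProduct]; ring
    · rw [smul_dotProduct, smul_eq_mul, smul_eq_mul]; ring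
    · rw [dotProduct_add]; ring
    · rw [dotProduct_smul, smul_eq_mul, smul_eq_mul]; ring
    · show (x + y) ⬝ᵥ (x + y) = x ⬝ᵥ x + y ⬝ᵥ y + 2 * (x ⬝ᵥ y)
      rw [add_dotProduct, dotProduct_add, dotProduct_add, dotProduct_comm y x]
      ring

lemma stdQ_polar_nondegenerate (F : Type*) [Field F] (h2 : (2 : F) ≠ 0) (n : ℕ) :
    (QuadraticMap.polarBilin (stdQ F n)).Nondegenerate := by
  have hq : ∀ u v : Fin n → F, stdQ F n (u + v) - stdQ F n u - stdQ F n v = 2 * (u ⬝ᵥ v) := by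
    intro u v
    show (u + v) ⬝ᵥ (u + v) - u ⬝ᵥ u - v ⬝ᵥ v = 2 * (u ⬝ᵥ v)
    rw [add_dotProduct, dotProduct_add, dotProduct_add, dotProduct_comm v u]
    ring
  have key : ∀ x : Fin n → F, (∀ y, 2 * (x ⬝ᵥ y) = 0) → x = 0 := by
    intro x hx
    ext i
    have h := hx (Pi.single i 1)
    rw [dotProduct_single] at h
    rcases mul_eq_zero.mp h with h' | h'
    · exact absurd h' h2
    · simpa using h'
  constructor
  · intro x hx
    refine key x fun y => ?_
    have h := hx y
    simp only [QuadraticMap.polarBilin_apply_apply, QuadraticMap.polar] at h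
    rwa [hq] at h
  · intro y hy
    refine key y fun x => ?_
    have h := hy x
    simp only [QuadraticMap.polarBilin_apply_apply, QuadraticMap.polar] at h
    rw [hq] at h
    rwa [dotProduct_comm] at h

lemma commutator_le_ker_det (H : Subgroup (GL (Fin n) K)) :
    ⁅H, H⁆ ≤ (Matrix.GeneralLinearGroup.det : GL (Fin n) K →* Kˣ).ker := by
  rw [Subgroup.commutator_le]
  intro g _ h _
  rw [MonoidHom.mem_ker, map_commutatorElement]
  exact commutatorElement_eq_one_iff_commute.mpr (mul_comm _ _)

lemma ker_det_le_range_toGL :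
    (Matrix.GeneralLinearGroup.det : GL (Fin n) K →* Kˣ).ker ≤
      (Matrix.SpecialLinearGroup.toGL (n := Fin n) (R := K)).range := by
  intro x hx
  rw [MonoidHom.mem_ker] at hx
  have hdet : (x : Matrix (Fin n) (Fin n) K).det = 1 := by
    have := congrArg Units.val hx
    rwa [Matrix.GeneralLinearGroup.val_det_apply, Units.val_one] at this
  exact ⟨⟨(x : Matrix (Fin n) (Fin n) K), hdet⟩, Units.ext rfl⟩

section FiniteFieldHelpers

variable {F : Type*} [Field F] [Fintype F]

/-- Surjectivity of the norm map onto the fixed subfield of a quadratic extension. -/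
lemma norm_surj (q : ℕ) (hq : 2 ≤ q) (hcard : Fintype.card F = q ^ 2)
    (y : F) (hy0 : y ≠ 0) (hy : y ^ q = y) : ∃ x : F, x * x ^ q = y := by
  classical
  obtain ⟨G, hG⟩ := IsCyclic.exists_generator (α := Fˣ)
  have hord : orderOf G = Nat.card Fˣ := orderOf_eq_card_of_forall_mem_zpowers hG
  have hcardu : Nat.card Fˣ = q ^ 2 - 1 := by
    rw [Nat.card_eq_fintype_card, Fintype.card_units, hcard]
  set Y : Fˣ := Units.mk0 y hy0 with hYdef
  obtain ⟨m, hm⟩ : ∃ m : ℕ, G ^ m = Y := by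
    have := hG Y
    rwa [← mem_powers_iff_mem_zpowers, Submonoid.mem_powers_iff] at this
  have hYq : Y ^ q = Y := by
    ext
    push_cast
    exact hy
  have hY1 : Y ^ (q - 1) = 1 := by
    have : Y ^ (q - 1) * Y = Y := by
      rw [← pow_succ]
      rw [show q - 1 + 1 = q by omega]
      exact hYq
    exact mul_right_cancel (by rw [this, one_mul])
  have hG1 : G ^ (m * (q - 1)) = 1 := by rw [pow_mul, hm, hY1]
  have hdvd : (q ^ 2 - 1) ∣ m * (q - 1) := by
    rw [← hcardu, ← hord]
    exact orderOf_dvd_of_pow_eq_one hG1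
  obtain ⟨t, rfl⟩ : ∃ t, q = t + 2 := ⟨q - 2, by omega⟩
  have hfact : (t + 2) ^ 2 - 1 = (t + 3) * (t + 1) := by
    have h1 : (t + 2) ^ 2 = t * t + 4 * t + 4 := by ring
    have h2 : (t + 3) * (t + 1) = t * t + 4 * t + 3 := by ring
    omega
  obtain ⟨e, he⟩ : (t + 3) ∣ m := by
    obtain ⟨e, he⟩ := hdvd
    rw [hfact] at he
    refine ⟨e, ?_⟩
    have hsub : t + 2 - 1 = t + 1 := by omega
    rw [hsub] at he
    have : m * (t + 1) = (t + 3) * e * (t + 1) := by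
      rw [he]; ring
    exact Nat.eq_of_mul_eq_mul_right (by omega) this
  refine ⟨((G ^ e : Fˣ) : F), ?_⟩
  have hval : (G ^ e) * (G ^ e) ^ (t + 2) = Y := by
    rw [← pow_mul, ← pow_add, ← hm, he]
    congr 1
    ring
  calc ((G ^ e : Fˣ) : F) * ((G ^ e : Fˣ) : F) ^ (t + 2)
      = (((G ^ e) * (G ^ e) ^ (t + 2) : Fˣ) : F) := by push_cast; ring
    _ = y := by rw [hval]; simp [hYdef]

/-- In a field of order `q²` not every element satisfies `x ^ q = x`. -/
lemma exists_nonfixed (q : ℕ) (hq : 2 ≤ q) (hcard : Fintype.card F = q ^ 2) :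
    ∃ x : F, x ^ q ≠ x := by
  classical
  by_contra hall
  push_neg at hall
  set p : Polynomial F := Polynomial.X ^ q - Polynomial.X with hp
  have hp0 : p ≠ 0 := by
    have hcoeff : p.coeff q = 1 := by
      rw [hp, Polynomial.coeff_sub, Polynomial.coeff_X_pow, if_pos rfl,
        Polynomial.coeff_X, if_neg (by omega : ¬(1 : ℕ) = q), sub_zero]
    intro h
    rw [h] at hcoeff
    simp at hcoeff
  have hsub : Finset.univ ⊆ p.roots.toFinset := by
    intro x _
    rw [Multiset.mem_toFinset, Polynomial.mem_roots hp0]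
    simp [hp, Polynomial.IsRoot, hall x]
  have hcard2 : Fintype.card F ≤ Multiset.card p.roots := by
    calc Fintype.card F = Finset.univ.card := rfl
      _ ≤ p.roots.toFinset.card := Finset.card_le_card hsub
      _ ≤ Multiset.card p.roots := Multiset.toFinset_card_le _
  have hdeg : p.natDegree ≤ q := by
    have h1 := Polynomial.natDegree_sub_le (Polynomial.X ^ q : Polynomial F) Polynomial.X
    rw [← hp] at h1
    refine le_trans h1 ?_
    simp only [Polynomial.natDegree_X_pow, Polynomial.natDegree_X]
    omega
  have := Polynomial.card_roots' p
  have : Fintype.card F ≤ q := le_trans hcard2 (le_trans this hdeg)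
  rw [hcard] at this
  nlinarith

/-- A nondegenerate hermitian form (w.r.t. an involution `σ` whose norm map hits every
`σ`-fixed element) in dimension `≥ 2` has a nonzero isotropic vector. -/
lemma exists_isotropic {F : Type*} [Field F] {n : ℕ} (hn : 2 ≤ n) (σ : F →+* F)
    (hσ2 : ∀ x, σ (σ x) = x)
    (J : Matrix (Fin n) (Fin n) F) (hJ : Jᵀ = J.map σ) (hJd : IsUnit J.det)
    (hnorm : ∀ y : F, y ≠ 0 → σ y = y → ∃ x : F, x * σ x = y) :
    ∃ u : Fin n → F, u ≠ 0 ∧ u ⬝ᵥ (J *ᵥ fun i => σ (u i)) = 0 := by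
  classical
  set g : (Fin n → F) → (Fin n → F) → F := fun x y => x ⬝ᵥ (J *ᵥ fun i => σ (y i)) with hgdef
  have hJσ : ∀ i j, σ (J i j) = J j i := by
    intro i j
    have := congrFun (congrFun hJ j) i
    rw [Matrix.transpose_apply, Matrix.map_apply] at this
    rw [this, hσ2]
  have hherm : ∀ x y, σ (g x y) = g y x := by
    intro x y
    simp only [hgdef, dotProduct, mulVec, map_sum, Finset.mul_sum]
    rw [Finset.sum_comm]
    refine Finset.sum_congr rfl fun j _ => Finset.sum_congr rfl fun i _ => ?_
    rw [_root_.map_mul, _root_.map_mul, hJσ, hσ2]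
    ring
  have hgaddr : ∀ x y z, g x (y + z) = g x y + g x z := by
    intro x y z
    simp only [hgdef]
    have : (fun i => σ ((y + z) i)) = (fun i => σ (y i)) + fun i => σ (z i) := by
      ext i; simp [_root_.map_add]
    rw [this, Matrix.mulVec_add, dotProduct_add]
  have hgaddl : ∀ x y z, g (x + y) z = g x z + g y z := by
    intro x y z
    simp only [hgdef, add_dotProduct]
  have hgsmulr : ∀ (c : F) x y, g x (c • y) = σ c * g x y := by
    intro c x y
    simp only [hgdef]
    have : (fun i => σ ((c • y) i)) = σ c • fun i => σ (y i) := by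
      ext i; simp [_root_.map_mul]
    rw [this, Matrix.mulVec_smul, dotProduct_smul, smul_eq_mul]
  have hgsmull : ∀ (c : F) x y, g (c • x) y = c * g x y := by
    intro c x y
    simp only [hgdef, smul_dotProduct, smul_eq_mul]
  have hbasis : ∀ i j : Fin n, g (Pi.single i 1) (Pi.single j 1) = J i j := by
    intro i j
    have hσe : (fun k => σ ((Pi.single j 1 : Fin n → F) k)) = (Pi.single j 1 : Fin n → F) := by
      ext k
      by_cases h : k = j
      · subst h; simp
      · simp [Pi.single_apply, h]
    simp only [hgdef, hσe, Matrix.mulVec_single_one, Matrix.col_apply, single_dotProduct, one_mul, mul_one]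
  -- the two distinguished indices
  set i0 : Fin n := ⟨0, by omega⟩
  set i1 : Fin n := ⟨1, by omega⟩
  have hne : i0 ≠ i1 := by simp [i0, i1, Fin.ext_iff]
  set e0 : Fin n → F := Pi.single i0 1
  set e1 : Fin n → F := Pi.single i1 1
  have hfix : ∀ x, σ (g x x) = g x x := fun x => hherm x x
  by_cases ha : g e0 e0 = 0
  · refine ⟨e0, fun h => ?_, ha⟩
    have := congrFun h i0
    simp only [e0, Pi.single_eq_same, Pi.zero_apply] at this
    exact one_ne_zero this
  · -- z := e1 - γ • e0 is orthogonal to e0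
    set γ : F := σ (g e0 e1 * (g e0 e0)⁻¹) with hγ
    set z : Fin n → F := e1 - γ • e0 with hz
    have hz1 : z i1 = 1 := by
      simp [hz, e0, e1, Pi.single_apply, hne, Ne.symm hne]
    have hz0 : z ≠ 0 := fun h => by
      have := congrFun h i1
      rw [hz1] at this
      exact one_ne_zero this
    have horth : g e0 z = 0 := by
      have hzalt : z = e1 + (-γ) • e0 := by rw [hz, neg_smul, ← sub_eq_add_neg]
      have hexp : g e0 z = g e0 e1 + σ (-γ) * g e0 e0 := by
        rw [hzalt, hgaddr, hgsmulr]
      rw [hexp, map_neg, hγ, hσ2, neg_mul, inv_mul_cancel_right₀ ha]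
      ring
    have horth' : g z e0 = 0 := by
      rw [← hherm, horth, map_zero]
    by_cases hb : g z z = 0
    · exact ⟨z, hz0, hb⟩
    · -- u := x • e0 + z with N(x) = - g z z / g e0 e0
      have hy0 : -(g z z * (g e0 e0)⁻¹) ≠ 0 := by
        simp only [ne_eq, neg_eq_zero, mul_eq_zero, not_or]
        exact ⟨hb, inv_ne_zero ha⟩
      have hyfix : σ (-(g z z * (g e0 e0)⁻¹)) = -(g z z * (g e0 e0)⁻¹) := by
        rw [map_neg, _root_.map_mul, map_inv₀, hfix, hfix]
      obtain ⟨x, hx⟩ := hnorm _ hy0 hyfix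
      refine ⟨x • e0 + z, ?_, ?_⟩
      · intro h
        have := congrFun h i1
        simp only [Pi.add_apply, Pi.smul_apply, Pi.zero_apply, smul_eq_mul] at this
        rw [hz1] at this
        have he0 : e0 i1 = 0 := by simp [e0, Pi.single_apply, Ne.symm hne]
        rw [he0, mul_zero, zero_add] at this
        exact one_ne_zero this
      · show g (x • e0 + z) (x • e0 + z) = 0
        simp only [hgaddl, hgaddr, hgsmull, hgsmulr, horth, horth', mul_zero,
          add_zero, zero_add]
        rw [show x * (σ x * g e0 e0) + g z z = x * σ x * g e0 e0 + g z z by ring, hx]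
        field_simp
        ring

end FiniteFieldHelpers

lemma vmv_smul_left (c : K) (x y : Fin n → K) :
    vecMulVec (c • x) y = c • vecMulVec x y := by
  ext i j; simp [vecMulVec_apply, mul_assoc]

lemma map_one_add' {L : Type*} [Field L] (f : K →+* L) (B : Matrix (Fin n) (Fin n) K) :
    (1 + B).map f = 1 + B.map f := by
  ext i j
  by_cases h : i = j
  · subst h; simp [Matrix.map_apply, Matrix.one_apply]
  · simp [Matrix.map_apply, Matrix.one_apply, h]

lemma dot_map {L : Type*} [Field L] (f : K →+* L) (x y : Fin n → K) :
    (f ∘ x) ⬝ᵥ (f ∘ y) = f (x ⬝ᵥ y) := by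
  simp [dotProduct, map_sum, _root_.map_mul]

lemma comp_ne_zero {L : Type*} [Field L] (f : K →+* L) (x : Fin n → K) (hx : x ≠ 0) :
    f ∘ x ≠ 0 := by
  obtain ⟨i, hi⟩ := Function.ne_iff.mp hx
  simp only [Pi.zero_apply] at hi
  intro h
  have := congrFun h i
  simp only [Function.comp_apply, Pi.zero_apply] at this
  exact hi ((map_eq_zero f).mp this)

end Helpers

/-- Let `n ≥ 8` be even, `ℓ` an odd prime, `K = F̄_ℓ` an algebraic closure of
`F_ℓ`, and let `d₀, t₀` be constants satisfying the conclusion of the group-theoretic theorem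
(hypothesis `h` below).  If `d > d₀` is an integer, `t > t₀` is a prime distinct from `ℓ`, and
`Γ` is a finite subgroup of `GO_n(F̄_ℓ)` (the similitude group of a fixed nondegenerate
symmetric bilinear form with matrix `J₀`) such that `Γ^d` contains a subgroup of type `Γ_t`,
then some conjugate `g⁻¹ Γ g` contains `Ω_n^ε(F_{ℓ^k})` for some `k ≥ 1` and some sign `ε`
(encoded by a nondegenerate quadratic form `Q` over `F_{ℓ^k}`). -/
theorem statement2 (n : ℕ) (hn : Even n) (h8 : 8 ≤ n) (ℓ : ℕ) [Fact ℓ.Prime] (hodd : Odd ℓ)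
    (K : Type) [Field K] [Algebra (ZMod ℓ) K] [IsAlgClosure (ZMod ℓ) K]
    (d0 t0 : ℕ)
    -- `d0` and `t0` satisfy the conclusion of the group-theoretic theorem:
    (h : ∀ (d t : ℕ), d0 < d → t0 < t → t.Prime → t ≠ ℓ →
      ∀ Γ : Subgroup (GL (Fin n) K), (Γ : Set (GL (Fin n) K)).Finite →
      (∃ Δ : Subgroup Γ, Δ ≤ capNormal Γ d ∧ IsGammaT t n Δ) →
      ∃ (g : GL (Fin n) K) (k : ℕ), 0 < k ∧
        ((∃ f : GaloisField ℓ k →+* K,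
            Subgroup.map (Matrix.GeneralLinearGroup.map f)
              (Matrix.SpecialLinearGroup.toGL (n := Fin n) (R := GaloisField ℓ k)).range
              ≤ conjSub g Γ) ∨
         (∃ (f : GaloisField ℓ (2 * k) →+* K) (σ : GaloisField ℓ (2 * k) →+* GaloisField ℓ (2 * k))
            (J : Matrix (Fin n) (Fin n) (GaloisField ℓ (2 * k))),
            (∀ x, σ x = x ^ ℓ ^ k) ∧ Jᵀ = J.map σ ∧ IsUnit J.det ∧
            Subgroup.map (Matrix.GeneralLinearGroup.map f)
              (sesqIsom σ J ⊓ (Matrix.GeneralLinearGroup.det).ker) ≤ conjSub g Γ) ∨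
         (∃ (f : GaloisField ℓ k →+* K) (J : Matrix (Fin n) (Fin n) (GaloisField ℓ k)),
            Jᵀ = -J ∧ (∀ i, J i i = 0) ∧ IsUnit J.det ∧
            Subgroup.map (Matrix.GeneralLinearGroup.map f)
              (sesqIsom (RingHom.id (GaloisField ℓ k)) J) ≤ conjSub g Γ) ∨
         (∃ (f : GaloisField ℓ k →+* K)
            (Q : QuadraticForm (GaloisField ℓ k) (Fin n → GaloisField ℓ k)),
            (QuadraticMap.polarBilin Q).Nondegenerate ∧
            Subgroup.map (Matrix.GeneralLinearGroup.map f) ⁅qIsom Q, qIsom Q⁆ ≤ conjSub g Γ)))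
    (d t : ℕ) (hd : d0 < d) (ht : t0 < t) (htp : t.Prime) (htl : t ≠ ℓ)
    -- the fixed nondegenerate symmetric bilinear form defining `GO_n(F̄_ℓ)`
    (J₀ : Matrix (Fin n) (Fin n) K) (hJ₀s : J₀ᵀ = J₀) (hJ₀n : IsUnit J₀.det)
    (Γ : Subgroup (GL (Fin n) K)) (hΓfin : (Γ : Set (GL (Fin n) K)).Finite)
    (hΓGO : Γ ≤ bSim J₀)
    (hΓt : ∃ Δ : Subgroup Γ, Δ ≤ capNormal Γ d ∧ IsGammaT t n Δ) :
    ∃ (g : GL (Fin n) K) (k : ℕ), 0 < k ∧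
      ∃ (f : GaloisField ℓ k →+* K)
        (Q : QuadraticForm (GaloisField ℓ k) (Fin n → GaloisField ℓ k)),
        (QuadraticMap.polarBilin Q).Nondegenerate ∧
        Subgroup.map (Matrix.GeneralLinearGroup.map f) ⁅qIsom Q, qIsom Q⁆ ≤ conjSub g Γ := by
  classical
  have hl3 : 3 ≤ ℓ := by
    have h2l := (Fact.out : ℓ.Prime).two_le
    rcases hodd with ⟨m, hm⟩
    omega
  haveI hcharK : CharP K ℓ := charP_of_injective_algebraMap
    (algebraMap (ZMod ℓ) K).injective ℓ
  have h2K : (2 : K) ≠ 0 := by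
    intro hcon
    have hdvd : ℓ ∣ 2 := (CharP.cast_eq_zero_iff K ℓ 2).mp (by exact_mod_cast hcon)
    have := Nat.le_of_dvd (by norm_num) hdvd
    omega
  have h3n : 3 ≤ n := by omega
  obtain ⟨g, k, hk, hcase⟩ := h d t hd ht htp htl Γ hΓfin hΓt
  set G : Matrix (Fin n) (Fin n) K := (g : Matrix (Fin n) (Fin n) K) with hG
  set J₁ : Matrix (Fin n) (Fin n) K := Gᵀ * J₀ * G with hJ₁
  have hJ₁s : J₁ᵀ = J₁ := by
    rw [hJ₁, Matrix.transpose_mul, Matrix.transpose_mul, Matrix.transpose_transpose, hJ₀s,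
      Matrix.mul_assoc]
  have hdetG : IsUnit G.det := by
    refine IsUnit.of_mul_eq_one ((g⁻¹ : GL (Fin n) K) : Matrix (Fin n) (Fin n) K).det ?_
    rw [← Matrix.det_mul, Units.mul_inv, Matrix.det_one]
  have hJ₁d : IsUnit J₁.det := by
    rw [hJ₁, Matrix.det_mul, Matrix.det_mul, Matrix.det_transpose]
    exact (hdetG.mul hJ₀n).mul hdetG
  -- the common contradiction machine
  have contra : ∀ (u w : Fin n → K), u ≠ 0 → w ≠ 0 → w ⬝ᵥ u = 0 →
      ∀ x : GL (Fin n) K, (x : Matrix (Fin n) (Fin n) K) = 1 + vecMulVec u w →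
      x ∈ conjSub g Γ → False := by
    intro u w hu hw hwu x hxval hx
    obtain ⟨c, hc, heq⟩ := conj_mem_bSim J₀ Γ hΓGO g x hx
    rw [hxval] at heq
    exact ortho_no_transvection h3n h2K J₁ hJ₁s hJ₁d u w hu hw hwu c heq
  rcases hcase with ⟨f, hle⟩ | ⟨f, σ, J, hσ, hJh, hJd, hle⟩ | ⟨f, J, hJa, hJdiag, hJd, hle⟩ | h4
  · -- SL case : use the standard quadratic form
    have h2F : (2 : GaloisField ℓ k) ≠ 0 := by
      intro hcon
      have hdvd : ℓ ∣ 2 := (CharP.cast_eq_zero_iff (GaloisField ℓ k) ℓ 2).mp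
        (by exact_mod_cast hcon)
      have := Nat.le_of_dvd (by norm_num) hdvd
      omega
    refine ⟨g, k, hk, f, stdQ (GaloisField ℓ k) n,
      stdQ_polar_nondegenerate (GaloisField ℓ k) h2F n, le_trans ?_ hle⟩
    apply Subgroup.map_mono
    exact le_trans (commutator_le_ker_det _) ker_det_le_range_toGL
  · -- SU case : contradiction via a unitary transvection
    exfalso
    let F : Type := GaloisField ℓ (2 * k)
    haveI : Fintype F := Fintype.ofFinite F
    let q : ℕ := ℓ ^ k
    have hq2 : 2 ≤ q := by
      show 2 ≤ ℓ ^ k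
      calc 2 ≤ ℓ := by omega
        _ = ℓ ^ 1 := (pow_one ℓ).symm
        _ ≤ ℓ ^ k := Nat.pow_le_pow_right (by omega) (by omega)
    have hcardF : Fintype.card F = q ^ 2 := by
      show Fintype.card (GaloisField ℓ (2 * k)) = (ℓ ^ k) ^ 2
      rw [← Nat.card_eq_fintype_card, GaloisField.card ℓ (2 * k) (by omega),
        ← pow_mul, mul_comm k 2]
    have hσ2 : ∀ x : F, σ (σ x) = x := by
      intro x
      rw [hσ, hσ, ← pow_mul]
      calc x ^ (q * q) = x ^ (q ^ 2) := by rw [pow_two]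
        _ = x ^ Fintype.card F := by rw [hcardF]
        _ = x := FiniteField.pow_card x
    have hnorm : ∀ y : F, y ≠ 0 → σ y = y → ∃ x : F, x * σ x = y := by
      intro y hy0 hyfix
      obtain ⟨x, hx⟩ := norm_surj q hq2 hcardF y hy0 (by rw [← hσ]; exact hyfix)
      exact ⟨x, by rw [hσ]; exact hx⟩
    obtain ⟨u, hu0, hiso⟩ := exists_isotropic (by omega : 2 ≤ n) σ hσ2 J hJh hJd hnorm
    -- a trace-zero element δ
    obtain ⟨x0, hx0⟩ := exists_nonfixed q hq2 (F := F) hcardF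
    set δ : F := x0 - σ x0 with hδ
    have hδ0 : δ ≠ 0 := by
      rw [hδ, sub_ne_zero]
      intro hcon
      exact hx0 (by rw [← hσ]; exact hcon.symm)
    have hδσ : σ δ = -δ := by
      rw [hδ, map_sub, hσ2, neg_sub]
    -- the unitary transvection
    set ub : Fin n → F := fun i => σ (u i) with hub
    set w : Fin n → F := J *ᵥ ub with hw
    have hs : u ⬝ᵥ w = 0 := hiso
    have hwu : w ⬝ᵥ (δ • u) = 0 := by
      rw [dotProduct_smul, dotProduct_comm, hs, smul_zero]
    set B : Matrix (Fin n) (Fin n) F := vecMulVec (δ • u) w with hB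
    have hB2 : B * B = 0 := by
      rw [hB, vmv_vmv, hwu, zero_smul]
    set A : GL (Fin n) F := unipUnit B hB2 with hA
    have hub0 : ub ≠ 0 := by
      obtain ⟨i, hi⟩ := Function.ne_iff.mp hu0
      simp only [Pi.zero_apply] at hi
      intro hcon
      have := congrFun hcon i
      simp only [hub, Pi.zero_apply] at this
      exact hi ((map_eq_zero σ).mp this)
    have hJinv : J⁻¹ * J = 1 := Matrix.nonsing_inv_mul J hJd
    have hw0 : w ≠ 0 := by
      intro hcon
      apply hub0
      have : J⁻¹ *ᵥ (J *ᵥ ub) = J⁻¹ *ᵥ 0 := by rw [← hw, hcon]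
      simpa [Matrix.mulVec_mulVec, hJinv] using this
    -- A is in the unitary group
    set r : Fin n → F := u ᵥ* J with hr
    have hσw : (fun j => σ (w j)) = r := by
      ext j
      simp only [hw, hr, mulVec, vecMul, dotProduct, map_sum, _root_.map_mul, hub]
      refine Finset.sum_congr rfl fun i _ => ?_
      rw [hσ2]
      have hJσ : σ (J j i) = J i j := by
        have := congrFun (congrFun hJh i) j
        rw [Matrix.transpose_apply, Matrix.map_apply] at this
        rw [this, hσ2]
      rw [hJσ]
      ring
    have hBσ : B.map σ = vecMulVec (σ δ • ub) r := by
      rw [hB]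
      have : (⇑σ ∘ (δ • u)) = σ δ • ub := by
        ext i
        simp [hub, _root_.map_mul]
      rw [show (vecMulVec (δ • u) w).map σ = vecMulVec (⇑σ ∘ (δ • u)) (⇑σ ∘ w) from
        vmv_map σ _ _, this]
      congr 1
    have hmemU : A ∈ sesqIsom σ J := by
      show ((A : GL (Fin n) F) : Matrix (Fin n) (Fin n) F)ᵀ * J *
        ((A : GL (Fin n) F) : Matrix (Fin n) (Fin n) F).map σ = J
      rw [hA, unipUnit_val, map_one_add' σ B, transpose_add, transpose_one]
      have hBtJ : Bᵀ * J = δ • vecMulVec w r := by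
        rw [hB, vmv_transpose, vmv_mul]
        have : (δ • u) ᵥ* J = δ • r := by
          rw [hr]
          ext j
          simp [vecMul, dotProduct, Finset.mul_sum, Finset.sum_mul, mul_assoc]
        rw [this]
        ext i j
        simp [vecMulVec_apply, Finset.mul_sum, mul_assoc, mul_left_comm]
      have hJBσ : J * B.map σ = σ δ • vecMulVec w r := by
        rw [hBσ, mul_vmv]
        have : J *ᵥ (σ δ • ub) = σ δ • w := by rw [Matrix.mulVec_smul, hw]
        rw [this, vmv_smul_left]
      have hrub : r ⬝ᵥ ub = 0 := by
        rw [hr, ← Matrix.dotProduct_mulVec, ← hw]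
        exact hs
      have hBJBσ : Bᵀ * J * B.map σ = 0 := by
        rw [hBtJ, hBσ, Matrix.smul_mul, vmv_vmv]
        rw [dotProduct_smul, hrub, smul_zero, zero_smul, smul_zero]
      have expand : (1 + Bᵀ) * J * (1 + B.map σ)
          = J + (Bᵀ * J + J * B.map σ + Bᵀ * J * B.map σ) := by noncomm_ring
      rw [expand, hBJBσ, hBtJ, hJBσ, hδσ, neg_smul, add_neg_cancel, zero_add, add_zero]
    have hmemD : A ∈ (Matrix.GeneralLinearGroup.det :
        GL (Fin n) F →* Fˣ).ker := by
      rw [MonoidHom.mem_ker]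
      ext
      rw [Matrix.GeneralLinearGroup.val_det_apply, Units.val_one]
      rw [hA, unipUnit_val, hB, det_one_add_vmv, hwu, add_zero]
    -- map it into the conjugate of Γ and contradict
    have hmem : Matrix.GeneralLinearGroup.map f A ∈ conjSub g Γ :=
      hle (Subgroup.mem_map_of_mem _ (Subgroup.mem_inf.mpr ⟨hmemU, hmemD⟩))
    refine contra (f ∘ (δ • u)) (f ∘ w) (comp_ne_zero f _ (smul_ne_zero hδ0 hu0))
      (comp_ne_zero f _ hw0) (by rw [dot_map, hwu, map_zero])
      (Matrix.GeneralLinearGroup.map f A) ?_ hmem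
    have : ((Matrix.GeneralLinearGroup.map f A : GL (Fin n) K) :
        Matrix (Fin n) (Fin n) K) = ((A : GL (Fin n) F) :
        Matrix (Fin n) (Fin n) F).map f := rfl
    rw [this, hA, unipUnit_val, map_one_add' f B, hB, vmv_map]
  · -- Sp case : contradiction via a symplectic transvection
    exfalso
    let F : Type := GaloisField ℓ k
    set i0 : Fin n := ⟨0, by omega⟩ with hi0
    set v : Fin n → F := Pi.single i0 1 with hv
    set w : Fin n → F := v ᵥ* J with hw
    have hwj : ∀ j, w j = J i0 j := by
      intro j
      simp [hw, hv, vecMul, dotProduct, Pi.single_apply]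
    have hv0 : v ≠ 0 := by
      intro hcon
      have := congrFun hcon i0
      simp only [hv, Pi.single_eq_same, Pi.zero_apply] at this
      exact one_ne_zero this
    have hw0 : w ≠ 0 := by
      intro hcon
      have : J.det = 0 := by
        apply Matrix.det_eq_zero_of_row_eq_zero i0
        intro j
        rw [← hwj j, hcon]
        rfl
      rw [this] at hJd
      exact (by simpa using hJd : False)
    have hwv : w ⬝ᵥ v = 0 := by
      simp only [dotProduct, hv]
      rw [Finset.sum_eq_single i0]
      · rw [hwj, hJdiag, Pi.single_eq_same, zero_mul]
      · intro b _ hb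
        simp [Pi.single_apply, hb]
      · intro hcon
        exact absurd (Finset.mem_univ i0) hcon
    set B : Matrix (Fin n) (Fin n) F := vecMulVec v w with hB
    have hB2 : B * B = 0 := by rw [hB, vmv_vmv, hwv, zero_smul]
    set A : GL (Fin n) F := unipUnit B hB2 with hA
    have hJv : J *ᵥ v = -w := by
      ext i
      have hJvi : (J *ᵥ v) i = J i i0 := by
        simp [mulVec, dotProduct, hv, Pi.single_apply]
      have h2 := congrFun (congrFun hJa i0) i
      rw [Matrix.transpose_apply] at h2
      rw [hJvi, Pi.neg_apply, hwj, h2]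
      simp
    have hmemSp : A ∈ sesqIsom (RingHom.id F) J := by
      show ((A : GL (Fin n) F) : Matrix (Fin n) (Fin n) F)ᵀ * J *
        ((A : GL (Fin n) F) : Matrix (Fin n) (Fin n) F).map (RingHom.id F) = J
      have hmapid : ((1 + B : Matrix (Fin n) (Fin n) F)).map (RingHom.id F) = 1 + B := by
        ext i j
        simp [Matrix.map_apply]
      rw [hA, unipUnit_val, hmapid, transpose_add, transpose_one]
      have hBtJ : Bᵀ * J = vecMulVec w w := by
        rw [hB, vmv_transpose, vmv_mul, ← hw]
      have hJB : J * B = -vecMulVec w w := by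
        rw [hB, mul_vmv, hJv]
        ext i j
        simp [vecMulVec_apply]
      have hBJB : Bᵀ * J * B = 0 := by
        rw [hBtJ, hB, vmv_vmv, hwv, zero_smul]
      have expand : (1 + Bᵀ) * J * (1 + B)
          = J + (Bᵀ * J + J * B + Bᵀ * J * B) := by noncomm_ring
      rw [expand, hBJB, hBtJ, hJB, add_neg_cancel, zero_add, add_zero]
    have hmem : Matrix.GeneralLinearGroup.map f A ∈ conjSub g Γ :=
      hle (Subgroup.mem_map_of_mem _ hmemSp)
    refine contra (f ∘ v) (f ∘ w) (comp_ne_zero f _ hv0) (comp_ne_zero f _ hw0)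
      (by rw [dot_map, hwv, map_zero]) (Matrix.GeneralLinearGroup.map f A) ?_ hmem
    have : ((Matrix.GeneralLinearGroup.map f A : GL (Fin n) K) :
        Matrix (Fin n) (Fin n) K) = ((A : GL (Fin n) F) :
        Matrix (Fin n) (Fin n) F).map f := rfl
    rw [this, hA, unipUnit_val, map_one_add' f B, hB, vmv_map]
  · -- orthogonal case : this is the desired conclusion
    obtain ⟨f, Q, hQ, hle⟩ := h4
    exact ⟨g, k, hk, f, Q, hQ, hle⟩
end

section
/- Let t be a prime and n a positive integer. Let E be a group with a normal subgroup T isomorphic to ℤ/tℤ such that E/T is cyclic of order n and the conjugation action of E/T on T is faithful. If φ : E → G is a surjective group homomorphism and G is non-abelian, then φ restricted to T is injective, φ(T) is a normal cyclic subgroup of G of order t, the quotient G/φ(T) is cyclic of order dividing n, the centralizer of φ(T) in G equals φ(T), and the conjugation action of G/φ(T) on φ(T) is faithful. In particular, G contains an element of order t. -/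
/-!
Statement 4: structure of non-abelian homomorphic images of a faithful extension of
`ℤ/nℤ` by `ℤ/tℤ` (`t` prime).
-/

/-- Let `t` be a prime and `n` a positive integer.  Let `E` be a group with a
normal subgroup `T ≅ ℤ/tℤ` such that `E/T` is cyclic of order `n` and the conjugation action
of `E/T` on `T` is faithful (i.e. any element of `E` centralizing `T` lies in `T`).  If
`φ : E → G` is a surjective homomorphism onto a non-abelian group `G`, then `φ` is injective
on `T`, `φ(T)` is a normal cyclic subgroup of `G` of order `t`, `G/φ(T)` is cyclic of order
dividing `n`, the centralizer of `φ(T)` in `G` is `φ(T)`, the conjugation action of `G/φ(T)`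
on `φ(T)` is faithful, and `G` contains an element of order `t`. -/
theorem statement4 (t n : ℕ) (ht : t.Prime) (hn : 0 < n)
    (E : Type*) [Group E] (T : Subgroup E) [hTnormal : T.Normal]
    (hT : Nonempty (T ≃* Multiplicative (ZMod t)))
    (hcyc : IsCyclic (E ⧸ T)) -- E/T cyclic
    (hcard : Nat.card (E ⧸ T) = n)  -- of order n
    (hfaithful : ∀ e : E, (∀ x ∈ T, e * x * e⁻¹ = x) → e ∈ T)
    (G : Type*) [Group G] (φ : E →* G) (hφ : Function.Surjective φ)
    (hG : ∃ a b : G, a * b ≠ b * a) :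
    Set.InjOn φ (T : Set E) ∧
    ∃ _ : (T.map φ).Normal,
      IsCyclic (T.map φ) ∧
      Nat.card (T.map φ) = t ∧
      IsCyclic (G ⧸ T.map φ) ∧
      Nat.card (G ⧸ T.map φ) ∣ n ∧
      Subgroup.centralizer (T.map φ : Set G) = T.map φ ∧
      (∀ g : G, (∀ x ∈ T.map φ, g * x * g⁻¹ = x) → g ∈ T.map φ) ∧
      ∃ g : G, orderOf g = t := by
  obtain ⟨ι⟩ := hT
  haveI : Fact t.Prime := ⟨ht⟩
  -- cardinality of T
  have hcardT : Nat.card T = t := by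
    rw [Nat.card_congr ι.toEquiv]; exact Nat.card_zmod t
  haveI hTfin : Finite T := Nat.finite_of_card_ne_zero (by rw [hcardT]; exact ht.pos.ne')
  -- T is commutative
  have hTcomm : ∀ x ∈ T, ∀ y ∈ T, x * y = y * x := by
    intro x hx y hy
    have h : (⟨x, hx⟩ * ⟨y, hy⟩ : T) = ⟨y, hy⟩ * ⟨x, hx⟩ := by
      apply ι.injective
      rw [map_mul, map_mul, mul_comm]
    simpa [Subtype.ext_iff] using h
  -- if T ≤ ker φ then G is abelian: contradiction
  have habel : ¬ (∀ x ∈ T, φ x = 1) := by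
    intro hTker
    obtain ⟨a, b, hab⟩ := hG
    obtain ⟨e1, rfl⟩ := hφ a
    obtain ⟨e2, rfl⟩ := hφ b
    apply hab
    letI : CommGroup (E ⧸ T) := IsCyclic.commGroup
    have h1 : ((e1 * e2 * e1⁻¹ * e2⁻¹ : E) : E ⧸ T) = 1 := by
      have hc : ((e1 : E ⧸ T)) * (e2 : E ⧸ T) = (e2 : E ⧸ T) * (e1 : E ⧸ T) := mul_comm _ _
      have : ((e1 * e2 * e1⁻¹ * e2⁻¹ : E) : E ⧸ T)
          = (e1 : E ⧸ T) * (e2 : E ⧸ T) * (e1 : E ⧸ T)⁻¹ * (e2 : E ⧸ T)⁻¹ := by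
        push_cast; rfl
      rw [this, hc]; group
    have hmem : e1 * e2 * e1⁻¹ * e2⁻¹ ∈ T := (QuotientGroup.eq_one_iff _).mp h1
    have h2 : φ (e1 * e2 * e1⁻¹ * e2⁻¹) = 1 := hTker _ hmem
    simp only [map_mul, map_inv] at h2
    have := mul_eq_one_iff_eq_inv.mp h2
    calc φ e1 * φ e2 = (φ e1 * φ e2 * (φ e1)⁻¹ * (φ e2)⁻¹) * (φ e2 * φ e1) := by group
      _ = φ e2 * φ e1 := by rw [h2]; group
  -- no nontrivial element of T lies in ker φ
  have hker : ∀ x ∈ T, φ x = 1 → x = 1 := by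
    intro x hx hφx
    by_contra hx1
    apply habel
    set xT : T := ⟨x, hx⟩ with hxT
    have hxT1 : xT ≠ 1 := by
      simp only [hxT, ne_eq, Subtype.ext_iff]; exact hx1
    have hord : orderOf xT = t := by
      refine orderOf_eq_prime ?_ hxT1
      rw [← hcardT]; exact pow_card_eq_one'
    have htop : Subgroup.zpowers xT = ⊤ := by
      apply Subgroup.eq_top_of_card_eq
      rw [Nat.card_zpowers, hord, hcardT]
    intro y hy
    have : (⟨y, hy⟩ : T) ∈ Subgroup.zpowers xT := htop ▸ Subgroup.mem_top _
    obtain ⟨k, hk⟩ := this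
    have hyx : y = x ^ k := by
      have := congrArg (Subtype.val) hk
      simpa using this.symm
    rw [hyx, map_zpow, hφx, one_zpow]
  -- φ is injective
  have hinj : Function.Injective φ := by
    rw [injective_iff_map_eq_one]
    intro k hk
    have hkT : k ∈ T := by
      apply hfaithful
      intro x hx
      have hc1 : k * x * k⁻¹ ∈ T := hTnormal.conj_mem x hx k
      have hc2 : k * x * k⁻¹ * x⁻¹ ∈ T := T.mul_mem hc1 (T.inv_mem hx)
      have hφc : φ (k * x * k⁻¹ * x⁻¹) = 1 := by
        simp [map_mul, map_inv, hk]
      have := hker _ hc2 hφc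
      have hx' : k * x * k⁻¹ = x := by
        have := mul_eq_one_iff_eq_inv.mp this
        simpa using this
      exact hx'
    exact hker k hkT hk
  -- the isomorphism T ≃* T.map φ
  have hcardmap : Nat.card (T.map φ) = t := by
    rw [← Nat.card_congr (Subgroup.equivMapOfInjective T φ hinj).toEquiv]
    exact hcardT
  haveI hmapfin : Finite (T.map φ) := Nat.finite_of_card_ne_zero (by rw [hcardmap]; exact ht.pos.ne')
  have hnorm : (T.map φ).Normal := hTnormal.map φ hφ
  -- centralizer
  have hfaith' : ∀ g : G, (∀ x ∈ T.map φ, g * x * g⁻¹ = x) → g ∈ T.map φ := by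
    intro g hg
    obtain ⟨e, rfl⟩ := hφ g
    have heT : e ∈ T := by
      apply hfaithful
      intro x hx
      apply hinj
      have := hg (φ x) ⟨x, hx, rfl⟩
      simpa [map_mul, map_inv] using this
    exact ⟨e, heT, rfl⟩
  have hcent : Subgroup.centralizer (T.map φ : Set G) = T.map φ := by
    ext g
    rw [Subgroup.mem_centralizer_iff]
    constructor
    · intro h
      apply hfaith' g
      intro x hx
      rw [← h x hx]; group
    · rintro ⟨e, he, rfl⟩ x hx
      obtain ⟨y, hy, rfl⟩ := hx
      rw [← map_mul, ← map_mul, hTcomm y hy e he]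
  refine ⟨hinj.injOn, hnorm, isCyclic_of_prime_card hcardmap, hcardmap, ?_, ?_, hcent, hfaith', ?_⟩
  · -- quotient is cyclic
    have hle : T ≤ (T.map φ).comap φ := Subgroup.le_comap_map φ T
    exact isCyclic_of_surjective (QuotientGroup.map T (T.map φ) φ hle) <|
      fun g => by
        obtain ⟨e, rfl⟩ := QuotientGroup.mk_surjective g
        obtain ⟨x, rfl⟩ := hφ e
        exact ⟨(x : E ⧸ T), rfl⟩
  · -- card divides n
    have hle : T ≤ (T.map φ).comap φ := Subgroup.le_comap_map φ T
    have hs : Function.Surjective (QuotientGroup.map T (T.map φ) φ hle) := by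
      intro g
      obtain ⟨e, rfl⟩ := QuotientGroup.mk_surjective g
      obtain ⟨x, rfl⟩ := hφ e
      exact ⟨(x : E ⧸ T), rfl⟩
    have := Subgroup.card_dvd_of_surjective _ hs
    rwa [hcard] at this
  · -- element of order t
    haveI : Nontrivial (T.map φ) := by
      apply Finite.one_lt_card_iff_nontrivial.mp
      rw [hcardmap]; exact ht.one_lt
    obtain ⟨g, hg1⟩ := exists_ne (1 : T.map φ)
    have hord : orderOf g = t := by
      refine orderOf_eq_prime ?_ hg1
      rw [← hcardmap]; exact pow_card_eq_one'
    refine ⟨(g : G), ?_⟩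
    rw [← hord]
    exact orderOf_injective (T.map φ).subtype (Subgroup.subtype_injective _) g
end
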